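/- arXiv:2008.02865 — 3 statements merged into one kernel-verified Lean document; each statement's English description precedes it below -/
import Mathlib

section
/- Let C be the 2n × 2n real symmetric circulant block matrix C = [[N, S],[S, N]], where N is an n × n symmetric Toeplitz matrix and S is the symmetric Toeplitz matrix completing C to a circulant. Let λ_0, …, λ_{2n−1} denote the eigenvalues of C indexed by the roots of unity z_j = exp(2πi j/(2n)). Then the smallest eigenvalue μ_min of N satisfies 2 μ_min ≥ (min over even j of λ_j) + (min over odd j of λ_j), and the largest eigenvalue μ_max of N satisfies 2 μ_max ≤ (max over even j of λ_j) + (max over odd j of λ_j). -/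
/-!
Let `v` be a real eigenvector of `N` for `μ`, placed at the positions `0, …, n - 1` of `ZMod (2n)`,
and let `v̂(j) = ∑ₚ vₚ ζ^{jp}` with `ζ = exp (2πi / 2n)`. Fourier inversion on `ZMod (2n)` turns
`vᵀ N v = μ ‖v‖²` into `2n μ ‖v‖² = ∑ⱼ Λⱼ |v̂(j)|²`. No two positions of `v` differ by `n`, so
`∑ⱼ (-1)ʲ |v̂(j)|² = 0`; with Parseval, the weights `|v̂(j)|² ≥ 0` have mass `n ‖v‖²` on the even
and on the odd frequencies separately. Bounding `Λⱼ` on each parity class by its minimum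
(maximum) gives the two inequalities.
-/

open Finset Matrix Real ZMod

section Fourier

variable {m : ℕ} [NeZero m] {ι : Type*} [Fintype ι]

theorem sum_sum_mul_stdAddChar_mul_stdAddChar (c : ZMod m → ℂ) (y : ZMod m) :
    ∑ j, (∑ k, c k * stdAddChar (j * k)) * stdAddChar (j * y) = m * c (-y) := by
  simp_rw [Finset.sum_mul, mul_assoc, ← AddChar.map_add_eq_mul, ← mul_add]
  rw [Finset.sum_comm]
  simp_rw [← Finset.mul_sum, AddChar.sum_mulShift _ (isPrimitive_stdAddChar m),
    add_eq_zero_iff_eq_neg, ZMod.card]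
  simp [mul_comm]

theorem norm_sq_sum_mul_stdAddChar (v : ι → ℝ) (x : ι → ZMod m) (j : ZMod m) :
    ((‖∑ p, v p * stdAddChar (j * x p)‖ ^ 2 : ℝ) : ℂ) =
      ∑ p, ∑ q, v p * v q * stdAddChar (j * (x q - x p)) := by
  rw [Complex.ofReal_pow, ← Complex.conj_mul', map_sum, Finset.sum_mul_sum]
  refine Finset.sum_congr rfl fun p _ => Finset.sum_congr rfl fun q _ => ?_
  rw [map_mul, Complex.conj_ofReal, ← AddChar.map_neg_eq_conj, mul_sub, sub_eq_neg_add,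
    AddChar.map_add_eq_mul]
  ring

theorem sum_re_mul_norm_sq (c : ZMod m → ℝ) (v : ι → ℝ) (x : ι → ZMod m) :
    ∑ j, (∑ k, c k * (stdAddChar (j * k)).re) * ‖∑ p, v p * stdAddChar (j * x p)‖ ^ 2 =
      m * ∑ p, ∑ q, v p * v q * c (x p - x q) := by
  have key : ∑ j, (∑ k, (c k : ℂ) * stdAddChar (j * k)) *
      ((‖∑ p, v p * stdAddChar (j * x p)‖ ^ 2 : ℝ) : ℂ) =
        ((m * ∑ p, ∑ q, v p * v q * c (x p - x q) : ℝ) : ℂ) := by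
    simp_rw [norm_sq_sum_mul_stdAddChar]
    push_cast
    simp_rw [Finset.mul_sum]
    rw [Finset.sum_comm]
    refine Finset.sum_congr rfl fun p _ => ?_
    rw [Finset.sum_comm]
    refine Finset.sum_congr rfl fun q _ => ?_
    simp_rw [mul_left_comm _ ((v p : ℂ) * v q), ← Finset.mul_sum,
      sum_sum_mul_stdAddChar_mul_stdAddChar, neg_sub]
  have := congrArg Complex.re key
  simpa only [Complex.re_sum, Complex.re_mul_ofReal, Complex.re_ofReal_mul, Complex.ofReal_re]
    using this

theorem sum_re_stdAddChar_mul_norm_sq (a : ZMod m) (v : ι → ℝ) (x : ι → ZMod m) :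
    ∑ j, (stdAddChar (j * a)).re * ‖∑ p, v p * stdAddChar (j * x p)‖ ^ 2 =
      m * ∑ p, ∑ q, if x p = x q + a then v p * v q else 0 := by
  simpa [ite_mul, Finset.sum_ite_eq', sub_eq_iff_eq_add'] using
    sum_re_mul_norm_sq (fun k => if k = a then 1 else 0) v x

theorem sum_norm_sq_sum_mul_stdAddChar {v : ι → ℝ} {x : ι → ZMod m} (hx : Function.Injective x) :
    ∑ j, ‖∑ p, v p * stdAddChar (j * x p)‖ ^ 2 = m * ∑ p, v p ^ 2 := by
  classical
  simpa [hx.eq_iff, sq] using sum_re_stdAddChar_mul_norm_sq 0 v x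

theorem sum_re_stdAddChar_mul_norm_sq_eq_zero {a : ZMod m} {x : ι → ZMod m}
    (ha : ∀ p q, x p ≠ x q + a) (v : ι → ℝ) :
    ∑ j, (stdAddChar (j * a)).re * ‖∑ p, v p * stdAddChar (j * x p)‖ ^ 2 = 0 := by
  simp [sum_re_stdAddChar_mul_norm_sq, ha]

omit [NeZero m] in
theorem natCast_fin_injective {k : ℕ} (hk : k ≤ m) :
    Function.Injective fun p : Fin k => ((p : ℕ) : ZMod m) := by
  intro p q h
  have := congrArg ZMod.val h
  rwa [ZMod.val_cast_of_lt (p.2.trans_le hk), ZMod.val_cast_of_lt (q.2.trans_le hk),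
    Fin.val_inj] at this

theorem sum_fin_natCast {M : Type*} [AddCommMonoid M] (f : ZMod m → M) :
    ∑ k : Fin m, f (k : ℕ) = ∑ x, f x :=
  Fintype.sum_bijective _ ((Fintype.bijective_iff_injective_and_card _).2
    ⟨natCast_fin_injective le_rfl, by simp⟩) _ _ fun _ => rfl

theorem sum_range_natCast {M : Type*} [AddCommMonoid M] (f : ZMod m → M) :
    ∑ t ∈ range m, f t = ∑ x, f x := by
  rw [← Fin.sum_univ_eq_sum_range (fun t => f t), sum_fin_natCast]

theorem re_stdAddChar_natCast_mul (j k : ℕ) :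
    (stdAddChar ((j : ZMod m) * (k : ZMod m))).re = cos (2 * π * j * k / m) := by
  rw [← Nat.cast_mul, stdAddChar_apply, toCircle_natCast, ← Complex.exp_ofReal_mul_I_re]
  push_cast
  ring_nf

theorem sum_fin_mul_cos_eq (c : ZMod m → ℝ) (t : ℕ) :
    ∑ k : Fin m, c (k : ℕ) * cos (2 * π * t * k / m) =
      ∑ k, c k * (stdAddChar ((t : ZMod m) * k)).re := by
  rw [← sum_fin_natCast]
  simp_rw [re_stdAddChar_natCast_mul]

end Fourier

theorem sum_filter_even_add_sum_filter_odd {M : Type*} [AddCommMonoid M] (s : Finset ℕ)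
    (g : ℕ → M) : ∑ t ∈ s.filter Even, g t + ∑ t ∈ s.filter Odd, g t = ∑ t ∈ s, g t := by
  simp_rw [← Nat.not_even_iff_odd]
  exact sum_filter_add_sum_filter_not s Even g

theorem sum_filter_even_sub_sum_filter_odd {R : Type*} [CommRing R] (s : Finset ℕ) (g : ℕ → R) :
    ∑ t ∈ s.filter Even, g t - ∑ t ∈ s.filter Odd, g t = ∑ t ∈ s, (-1) ^ t * g t := by
  have heven : ∑ t ∈ s.filter Even, (-1) ^ t * g t = ∑ t ∈ s.filter Even, g t :=
    sum_congr rfl fun t ht => by rw [(mem_filter.1 ht).2.neg_one_pow, one_mul]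
  have hodd : ∑ t ∈ s.filter Odd, (-1) ^ t * g t = -∑ t ∈ s.filter Odd, g t := by
    rw [← sum_neg_distrib]
    exact sum_congr rfl fun t ht => by rw [(mem_filter.1 ht).2.neg_one_pow, neg_one_mul]
  rw [← sum_filter_even_add_sum_filter_odd s, heven, hodd, sub_eq_add_neg]

section DoubleLength

variable {n : ℕ} [NeZero n]

omit [NeZero n] in
theorem natCast_fin_ne_add (p q : Fin n) :
    ((p : ℕ) : ZMod (2 * n)) ≠ ((q : ℕ) : ZMod (2 * n)) + (n : ℕ) := by
  intro h
  rw [← Nat.cast_add] at h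
  have := congrArg ZMod.val h
  rw [ZMod.val_cast_of_lt (by omega), ZMod.val_cast_of_lt (by omega)] at this
  omega

theorem re_stdAddChar_mul_half (t : ℕ) :
    (stdAddChar ((t : ZMod (2 * n)) * ((n : ℕ) : ZMod (2 * n)))).re = (-1) ^ t := by
  rw [re_stdAddChar_natCast_mul, ← cos_nat_mul_pi]
  congr 1
  have : (n : ℝ) ≠ 0 := NeZero.ne _
  push_cast
  field_simp

noncomputable def powerSpectrum (v : Fin n → ℝ) (j : ZMod (2 * n)) : ℝ :=
  ‖∑ p : Fin n, v p * stdAddChar (j * ((p : ℕ) : ZMod (2 * n)))‖ ^ 2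

theorem sum_powerSpectrum_filter_even_and_odd (v : Fin n → ℝ) :
    ∑ t ∈ (range (2 * n)).filter Even, powerSpectrum v t = n * ∑ p, v p ^ 2 ∧
      ∑ t ∈ (range (2 * n)).filter Odd, powerSpectrum v t = n * ∑ p, v p ^ 2 := by
  have htotal : ∑ t ∈ range (2 * n), powerSpectrum v t = 2 * n * ∑ p, v p ^ 2 := by
    rw [sum_range_natCast (powerSpectrum v)]
    unfold powerSpectrum
    rw [sum_norm_sq_sum_mul_stdAddChar (natCast_fin_injective (by omega))]
    push_cast
    ring
  have halternating : ∑ t ∈ range (2 * n), (-1) ^ t * powerSpectrum v t = 0 := by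
    simp_rw [← re_stdAddChar_mul_half (n := n)]
    rw [sum_range_natCast (fun j => (stdAddChar (j * ((n : ℕ) : ZMod (2 * n)))).re *
      powerSpectrum v j)]
    exact sum_re_stdAddChar_mul_norm_sq_eq_zero natCast_fin_ne_add v
  have hadd := sum_filter_even_add_sum_filter_odd (range (2 * n)) (fun t => powerSpectrum v t)
  have hsub := sum_filter_even_sub_sum_filter_odd (range (2 * n)) (fun t => powerSpectrum v t)
  constructor <;> linarith

theorem sum_range_mul_powerSpectrum (c : ZMod (2 * n) → ℝ) (v : Fin n → ℝ) :
    ∑ t ∈ range (2 * n), (∑ k : Fin (2 * n), c (k : ℕ) * cos (2 * π * t * k / (2 * n))) *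
        powerSpectrum v t =
      2 * n * ∑ p : Fin n, ∑ q : Fin n, v p * v q * c ((p : ℕ) - (q : ℕ)) := by
  have hcos (t : ℕ) := sum_fin_mul_cos_eq c t
  push_cast at hcos
  simp_rw [hcos]
  rw [sum_range_natCast (fun j => (∑ k, c k * (stdAddChar (j * k)).re) * powerSpectrum v j)]
  unfold powerSpectrum
  rw [sum_re_mul_norm_sq]
  push_cast
  rfl

end DoubleLength

theorem finite_setOf_exists_lt_and_eq (m : ℕ) (P : ℕ → Prop) (f : ℕ → ℝ) :
    {x | ∃ j < m, P j ∧ x = f j}.Finite :=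
  ((Set.finite_Iio m).image f).subset fun _ ⟨j, hj, _, hx⟩ => ⟨j, hj, hx.symm⟩

theorem sInf_mul_sum_filter_le (m : ℕ) (P : ℕ → Prop) [DecidablePred P] (f F : ℕ → ℝ)
    (hF : ∀ t, 0 ≤ F t) :
    sInf {x | ∃ j < m, P j ∧ x = f j} * ∑ t ∈ (range m).filter P, F t ≤
      ∑ t ∈ (range m).filter P, f t * F t := by
  rw [mul_sum]
  refine sum_le_sum fun t ht => mul_le_mul_of_nonneg_right
    (csInf_le (finite_setOf_exists_lt_and_eq m P f).bddBelow ?_) (hF t)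
  simp only [mem_filter, mem_range] at ht
  exact ⟨t, ht.1, ht.2, rfl⟩

theorem sum_filter_le_sSup_mul (m : ℕ) (P : ℕ → Prop) [DecidablePred P] (f F : ℕ → ℝ)
    (hF : ∀ t, 0 ≤ F t) :
    ∑ t ∈ (range m).filter P, f t * F t ≤
      sSup {x | ∃ j < m, P j ∧ x = f j} * ∑ t ∈ (range m).filter P, F t := by
  rw [mul_sum]
  refine sum_le_sum fun t ht => mul_le_mul_of_nonneg_right
    (le_csSup (finite_setOf_exists_lt_and_eq m P f).bddAbove ?_) (hF t)
  simp only [mem_filter, mem_range] at ht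
  exact ⟨t, ht.1, ht.2, rfl⟩

theorem stmt_9_general (n : ℕ) (hn : 0 < n) (c : ZMod (2 * n) → ℝ)
    (N : Matrix (Fin n) (Fin n) ℝ)
    (hN : ∀ i j : Fin n, N i j = c (((i : ℕ) : ZMod (2 * n)) - ((j : ℕ) : ZMod (2 * n))))
    (Λ : ℕ → ℝ)
    (hΛ : ∀ j : ℕ, Λ j = ∑ k : Fin (2 * n),
      c ((k : ℕ) : ZMod (2 * n)) * Real.cos (2 * π * j * k / (2 * n)))
    (μ : ℝ) (hμ : ∃ v : Fin n → ℝ, v ≠ 0 ∧ N.mulVec v = μ • v) :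
    sInf {x | ∃ j < 2 * n, Even j ∧ x = Λ j} + sInf {x | ∃ j < 2 * n, Odd j ∧ x = Λ j}
      ≤ 2 * μ ∧
    2 * μ ≤
      sSup {x | ∃ j < 2 * n, Even j ∧ x = Λ j} + sSup {x | ∃ j < 2 * n, Odd j ∧ x = Λ j} := by
  have := NeZero.of_pos hn
  obtain ⟨v, hv0, hNv⟩ := hμ
  set F : ℕ → ℝ := fun t => powerSpectrum v t
  set W := ∑ p, v p ^ 2
  have hF : ∀ t, 0 ≤ F t := fun t => sq_nonneg _
  have hnW : 0 < n * W := by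
    obtain ⟨p, hp⟩ := Function.ne_iff.1 hv0
    exact mul_pos (by exact_mod_cast hn)
      (sum_pos' (fun p _ => sq_nonneg _) ⟨p, mem_univ p, sq_pos_of_ne_zero hp⟩)
  have hquad : ∑ p : Fin n, ∑ q : Fin n, v p * v q * c ((p : ℕ) - (q : ℕ)) = μ * W := by
    calc _ = v ⬝ᵥ (N *ᵥ v) := by
          simp only [dotProduct, mulVec, hN, Finset.mul_sum]
          exact sum_congr rfl fun p _ => sum_congr rfl fun q _ => by ring
      _ = μ * W := by simp [hNv, dotProduct, W, Finset.mul_sum, sq, mul_left_comm]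
  have hspec : ∑ t ∈ range (2 * n), Λ t * F t = 2 * μ * (n * W) := by
    simp_rw [hΛ]
    rw [sum_range_mul_powerSpectrum, hquad]
    ring
  obtain ⟨hE, hO⟩ := sum_powerSpectrum_filter_even_and_odd v
  rw [← sum_filter_even_add_sum_filter_odd] at hspec
  have hinfE := sInf_mul_sum_filter_le (2 * n) Even Λ F hF
  have hinfO := sInf_mul_sum_filter_le (2 * n) Odd Λ F hF
  have hsupE := sum_filter_le_sSup_mul (2 * n) Even Λ F hF
  have hsupO := sum_filter_le_sSup_mul (2 * n) Odd Λ F hF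
  rw [hE] at hinfE hsupE
  rw [hO] at hinfO hsupO
  constructor <;> refine le_of_mul_le_mul_right ?_ hnW <;> linarith

/-- Ferreira's eigenvalue bounds: the eigenvalues of a symmetric Toeplitz matrix `N`
(the `n × n` leading block of a `2n × 2n` symmetric circulant matrix `C` with symbol `c`)
are bounded using the explicit eigenvalues `Λ j = ∑_k c k cos(2π j k / (2n))` of `C`:
`(min over even j) + (min over odd j) ≤ 2 μ ≤ (max over even j) + (max over odd j)`
for every eigenvalue `μ` of `N`. -/
theorem stmt_9 (n : ℕ) (hn : 0 < n) (c : ZMod (2 * n) → ℝ)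
    (hc_even : ∀ k, c (-k) = c k)
    (N : Matrix (Fin n) (Fin n) ℝ)
    (hN : ∀ i j : Fin n, N i j = c (((i : ℕ) : ZMod (2 * n)) - ((j : ℕ) : ZMod (2 * n))))
    (Λ : ℕ → ℝ)
    (hΛ : ∀ j : ℕ, Λ j = ∑ k : Fin (2 * n),
      c ((k : ℕ) : ZMod (2 * n)) * Real.cos (2 * π * j * k / (2 * n)))
    (μ : ℝ) (hμ : ∃ v : Fin n → ℝ, v ≠ 0 ∧ N.mulVec v = μ • v) :
    sInf {x | ∃ j < 2 * n, Even j ∧ x = Λ j} + sInf {x | ∃ j < 2 * n, Odd j ∧ x = Λ j}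
      ≤ 2 * μ ∧
    2 * μ ≤
      sSup {x | ∃ j < 2 * n, Even j ∧ x = Λ j} + sSup {x | ∃ j < 2 * n, Odd j ∧ x = Λ j} :=
  stmt_9_general n hn c N hN Λ hΛ μ hμ
end

section
/- Let ν ∈ L¹(ℝ) be even with ∫_ℝ ν = 1, and suppose ν is exponentially localized: |∫_{|x| ≥ R} ν(x) dx| ≤ 2 e^{−ηR} for some η > 0 and all large R. Suppose the Fourier symbol satisfies L̂(k) := 1 − ∫_ℝ ν(x) cos(kx) dx = M(k) k²/(1 + k²) with M(k) ≥ c_M > 0 for all real k. Then for every integer j ≥ 1 and all sufficiently large L > 0, the quantity Λ_j = 1 − ∫_{−2L}^{2L} ν(x) cos(jπx/(2L)) dx satisfies Λ_j ≥ c_M π²/((2L)² + π²) − 2 e^{−ηL} > 0. -/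
/-!
Put `k = jπ/(2L)`. The symbol identity gives `Λ_j = M(k) k²/(1+k²) + T` with `T` the integral of
`ν(x) cos(kx)` over `|x| > 2L`, and `k ↦ k²/(1+k²)` is increasing, so `k²/(1+k²)` is at least its
value `π²/((2L)²+π²)` at `k = π/(2L)`. For `|k| > 1` the crude bound `|T| ≤ ∫_{|x|>2L} |ν| ≤ c_M/4`
suffices, since then `k²/(1+k²) ≥ 1/2`. For `|k| ≤ 1` one integrates by parts against the tail
`G(t) = ∫_t^∞ ν`, which is `O(e^{-ηt})` by evenness and the tail condition; this gives
`|T| ≤ 2(1 + 1/η) e^{-2ηL}`, which is `≤ 2e^{-ηL}` for large `L`.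
-/

open MeasureTheory Real Set Filter Topology

theorem MeasureTheory.Integrable.mul_cos {ν : ℝ → ℝ} (hν : Integrable ν) (k : ℝ) :
    Integrable fun x => ν x * cos (k * x) :=
  hν.mul_bdd (by fun_prop : Continuous fun x => cos (k * x)).aestronglyMeasurable
    (.of_forall fun x => abs_cos_le_one _)

theorem abs_setIntegral_mul_cos_le {ν : ℝ → ℝ} (hν : Integrable ν) (s : Set ℝ) (k : ℝ) :
    |∫ x in s, ν x * cos (k * x)| ≤ ∫ x in s, |ν x| :=
  norm_integral_le_of_norm_le (f := fun x => ν x * cos (k * x)) hν.abs.integrableOn <|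
    .of_forall fun x => by
      rw [norm_mul, norm_eq_abs]
      exact mul_le_of_le_one_right (abs_nonneg _) (abs_cos_le_one _)

section Even

variable {f : ℝ → ℝ}

theorem integral_Iic_neg_of_even (hf : ∀ x, f (-x) = f x) (c : ℝ) :
    ∫ x in Iic (-c), f x = ∫ x in Ioi c, f x := by
  rw [← integral_comp_neg_Ioi]
  simp only [hf]

theorem integral_compl_Icc_of_even (hf_int : Integrable f) (hf : ∀ x, f (-x) = f x) {c : ℝ}
    (hc : 0 ≤ c) : ∫ x in (Icc (-c) c)ᶜ, f x = 2 * ∫ x in Ioi c, f x := by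
  have hset : (Icc (-c) c)ᶜ = Iio (-c) ∪ Ioi c := by
    ext x
    simp only [mem_compl_iff, mem_Icc, not_and_or, not_le, mem_union, mem_Iio, mem_Ioi]
  rw [hset, setIntegral_union (Iio_disjoint_Ioi_of_le (by linarith)) measurableSet_Ioi
    hf_int.integrableOn hf_int.integrableOn, ← integral_Iic_eq_integral_Iio,
    integral_Iic_neg_of_even hf]
  ring

theorem integral_setOf_le_abs_of_even (hf_int : Integrable f) (hf : ∀ x, f (-x) = f x) {R : ℝ}
    (hR : 0 < R) : ∫ x in {x | R ≤ |x|}, f x = 2 * ∫ x in Ioi R, f x := by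
  have hset : {x : ℝ | R ≤ |x|} = Iic (-R) ∪ Ici R := by
    ext x
    simp [le_abs']
  rw [hset, setIntegral_union (Iic_disjoint_Ici.2 (by linarith)) measurableSet_Ici
    hf_int.integrableOn hf_int.integrableOn, integral_Iic_neg_of_even hf,
    integral_Ici_eq_integral_Ioi]
  ring

theorem exists_abs_integral_Ioi_le_of_even (hf_int : Integrable f) (hf : ∀ x, f (-x) = f x)
    {g : ℝ → ℝ} (htail : ∃ R₀ : ℝ, ∀ R ≥ R₀, |∫ x in {x : ℝ | R ≤ |x|}, f x| ≤ 2 * g R) :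
    ∃ R₀ : ℝ, ∀ t ≥ R₀, |∫ x in Ioi t, f x| ≤ g t := by
  obtain ⟨R₀, hR₀⟩ := htail
  refine ⟨max R₀ 1, fun t ht => ?_⟩
  have := hR₀ t (le_of_max_le_left ht)
  rw [integral_setOf_le_abs_of_even hf_int hf (by linarith [le_max_right R₀ 1]), abs_mul,
    abs_two] at this
  linarith

end Even

section TailIntegral

variable {ν : ℝ → ℝ}

theorem integral_Ioi_eq_sub_intervalIntegral (hν : Integrable ν) (a t : ℝ) :
    ∫ x in Ioi t, ν x = (∫ x in Ioi a, ν x) - ∫ x in a..t, ν x := by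
  rw [← intervalIntegral.integral_Ioi_sub_Ioi' hν.integrableOn hν.integrableOn, sub_sub_cancel]

theorem continuous_integral_Ioi (hν : Integrable ν) : Continuous fun t => ∫ x in Ioi t, ν x := by
  rw [funext (integral_Ioi_eq_sub_intervalIntegral hν 0)]
  exact continuous_const.sub (hν.continuous_primitive 0)

theorem intervalIntegral_mul_cos_eq (hν : Integrable ν) (k a b : ℝ) :
    ∫ x in a..b, ν x * cos (k * x) =
      cos (k * a) * (∫ x in Ioi a, ν x) - cos (k * b) * (∫ x in Ioi b, ν x)
        - ∫ t in a..b, k * sin (k * t) * ∫ x in Ioi t, ν x := by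
  set P : ℝ → ℝ := fun t => (∫ x in a..t, ν x) - ∫ x in Ioi a, ν x
  have hP : ∀ t, P t = -∫ x in Ioi t, ν x := fun t => by
    simp only [P, integral_Ioi_eq_sub_intervalIntegral hν a t, neg_sub]
  have hP_ac : AbsolutelyContinuousOnInterval P a b :=
    (hν.intervalIntegrable.absolutelyContinuousOnInterval_intervalIntegral
      left_mem_uIcc).sub (LipschitzWith.const _).lipschitzOnWith.absolutelyContinuousOnInterval
  have hcos_ac : AbsolutelyContinuousOnInterval (fun x => cos (k * x)) a b :=
    (by fun_prop : ContDiff ℝ 1 fun x => cos (k * x)).contDiffOn.absolutelyContinuousOnInterval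
  have hcos_deriv : ∀ x, deriv (fun x => cos (k * x)) x = -(k * sin (k * x)) := fun x =>
    (((hasDerivAt_id x).const_mul k).cos.congr_deriv (by simp; ring)).deriv
  have hP_deriv : ∀ᵐ x, x ∈ uIoc a b → deriv P x = ν x := by
    filter_upwards [hν.intervalIntegrable.ae_hasDerivAt_integral (a := a) (b := b)] with x hx hxab
    exact ((hx (uIoc_subset_uIcc hxab) a left_mem_uIcc).sub_const _).deriv
  have := hcos_ac.integral_mul_deriv_eq_deriv_mul hP_ac
  rw [intervalIntegral.integral_congr_ae (hP_deriv.mono fun x hx hxab => by rw [hx hxab])] at this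
  simp only [hcos_deriv, hP, neg_mul, mul_neg, neg_neg] at this
  simp only [mul_comm (ν _), this]
  ring

theorem abs_integral_Ioi_mul_cos_le (hν : Integrable ν) (k a : ℝ)
    (hG : IntegrableOn (fun t => ∫ x in Ioi t, ν x) (Ioi a)) :
    |∫ x in Ioi a, ν x * cos (k * x)|
      ≤ |∫ x in Ioi a, ν x| + |k| * ∫ t in Ioi a, |∫ x in Ioi t, ν x| := by
  have h_lhs : Tendsto (fun b => |∫ x in a..b, ν x * cos (k * x)|) atTop
      (𝓝 |∫ x in Ioi a, ν x * cos (k * x)|) :=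
    (intervalIntegral_tendsto_integral_Ioi a (hν.mul_cos k).integrableOn tendsto_id).abs
  have h_rhs : Tendsto (fun b => |∫ x in Ioi a, ν x| + |∫ x in Ioi b, ν x|
      + |k| * ∫ t in Ioi a, |∫ x in Ioi t, ν x|) atTop
      (𝓝 (|∫ x in Ioi a, ν x| + |k| * ∫ t in Ioi a, |∫ x in Ioi t, ν x|)) := by
    have := (tendsto_integral_Ioi_zero (f := ν) (μ := volume) tendsto_id).abs
    simpa using (tendsto_const_nhds.add this).add tendsto_const_nhds
  refine le_of_tendsto_of_tendsto h_lhs h_rhs (eventually_atTop.2 ⟨a, fun b hab => ?_⟩)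
  have h_sin : |∫ t in a..b, k * sin (k * t) * ∫ x in Ioi t, ν x|
      ≤ |k| * ∫ t in Ioi a, |∫ x in Ioi t, ν x| := by
    calc |∫ t in a..b, k * sin (k * t) * ∫ x in Ioi t, ν x|
        ≤ ∫ t in a..b, |k| * |∫ x in Ioi t, ν x| := by
          refine intervalIntegral.norm_integral_le_of_norm_le (f := fun t => k * sin (k * t) * _)
            hab (.of_forall fun t _ => ?_)
            ((intervalIntegrable_iff_integrableOn_Ioc_of_le hab).2
              ((hG.mono_set Ioc_subset_Ioi_self).abs.const_mul _))
          simp only [norm_mul, norm_eq_abs]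
          gcongr
          exact mul_le_of_le_one_right (abs_nonneg k) (abs_sin_le_one _)
      _ ≤ ∫ t in Ioi a, |k| * |∫ x in Ioi t, ν x| := by
          rw [intervalIntegral.integral_of_le hab]
          exact setIntegral_mono_set (hG.abs.const_mul _) (.of_forall fun t => by positivity)
            Ioc_subset_Ioi_self.eventuallyLE
      _ = |k| * ∫ t in Ioi a, |∫ x in Ioi t, ν x| := integral_const_mul _ _
  have h_cos : ∀ t c : ℝ, |cos t * c| ≤ |c| := fun t c =>
    (abs_mul _ _).trans_le (mul_le_of_le_one_left (abs_nonneg c) (abs_cos_le_one t))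
  simp only [intervalIntegral_mul_cos_eq hν]
  linarith [abs_sub (cos (k * a) * (∫ x in Ioi a, ν x) - cos (k * b) * (∫ x in Ioi b, ν x))
    (∫ t in a..b, k * sin (k * t) * ∫ x in Ioi t, ν x),
    abs_sub (cos (k * a) * (∫ x in Ioi a, ν x)) (cos (k * b) * (∫ x in Ioi b, ν x)),
    h_cos (k * a) (∫ x in Ioi a, ν x), h_cos (k * b) (∫ x in Ioi b, ν x)]

theorem abs_integral_Ioi_mul_cos_le_of_tail (hν : Integrable ν) {η a : ℝ} (hη : 0 < η)
    (htail : ∀ t ≥ a, |∫ x in Ioi t, ν x| ≤ exp (-η * t)) (k : ℝ) :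
    |∫ x in Ioi a, ν x * cos (k * x)| ≤ (1 + |k| / η) * exp (-η * a) := by
  have hexp : IntegrableOn (fun t => exp (-η * t)) (Ioi a) :=
    integrableOn_exp_mul_Ioi (neg_lt_zero.2 hη) a
  have htail' : ∀ t ∈ Ioi a, |∫ x in Ioi t, ν x| ≤ exp (-η * t) := fun t ht => htail t ht.le
  have hG : IntegrableOn (fun t => ∫ x in Ioi t, ν x) (Ioi a) :=
    hexp.mono' (continuous_integral_Ioi hν).aestronglyMeasurable
      (ae_restrict_of_forall_mem measurableSet_Ioi htail')
  have hG_int : ∫ t in Ioi a, |∫ x in Ioi t, ν x| ≤ exp (-η * a) / η := by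
    calc ∫ t in Ioi a, |∫ x in Ioi t, ν x| ≤ ∫ t in Ioi a, exp (-η * t) :=
          setIntegral_mono_on hG.abs hexp measurableSet_Ioi htail'
      _ = exp (-η * a) / η := by rw [integral_exp_mul_Ioi (neg_lt_zero.2 hη)]; ring
  calc |∫ x in Ioi a, ν x * cos (k * x)|
      ≤ |∫ x in Ioi a, ν x| + |k| * ∫ t in Ioi a, |∫ x in Ioi t, ν x| :=
        abs_integral_Ioi_mul_cos_le hν k a hG
    _ ≤ exp (-η * a) + |k| * (exp (-η * a) / η) := by gcongr; exact htail a le_rfl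
    _ = (1 + |k| / η) * exp (-η * a) := by ring

end TailIntegral

theorem tendsto_integral_compl_Icc_atTop {f : ℝ → ℝ} (hf : Integrable f) :
    Tendsto (fun c => ∫ x in (Icc (-c) c)ᶜ, f x) atTop (𝓝 0) := by
  have h_anti : Antitone fun c : ℝ => (Icc (-c) c)ᶜ := fun c c' h =>
    compl_subset_compl.2 (Icc_subset_Icc (neg_le_neg h) h)
  have h_empty : ⋂ c : ℝ, (Icc (-c) c)ᶜ = ∅ :=
    iInter_eq_empty_iff.2 fun x => ⟨|x|, fun hx => hx (abs_le.1 le_rfl)⟩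
  simpa [h_empty] using tendsto_setIntegral_of_antitone (fun c => measurableSet_Icc.compl)
    h_anti ⟨0, hf.integrableOn⟩

theorem eventually_abs_integral_compl_Icc_mul_cos_le {ν : ℝ → ℝ} (hν : Integrable ν)
    (hν_even : ∀ x, ν (-x) = ν x) {η : ℝ} (hη : 0 < η)
    (htail : ∃ R₀, ∀ t ≥ R₀, |∫ x in Ioi t, ν x| ≤ exp (-η * t)) :
    ∀ᶠ L in atTop, ∀ k : ℝ, |k| ≤ 1 →
      |∫ x in (Icc (-(2 * L)) (2 * L))ᶜ, ν x * cos (k * x)| ≤ 2 * exp (-η * L) := by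
  obtain ⟨R₀, hR₀⟩ := htail
  have h_decay : Tendsto (fun L => (1 + 1 / η) * exp (-η * L)) atTop (𝓝 0) := by
    simpa using (tendsto_exp_atBot.comp
      (tendsto_id.const_mul_atTop_of_neg (neg_lt_zero.2 hη))).const_mul (1 + 1 / η)
  filter_upwards [eventually_ge_atTop (max R₀ 0), h_decay.eventually (eventually_le_nhds one_pos)]
    with L hL hL_decay k hk
  have hL0 : 0 ≤ L := le_of_max_le_right hL
  have h_even : ∀ x, ν (-x) * cos (k * -x) = ν x * cos (k * x) := fun x => by
    rw [hν_even, mul_neg, cos_neg]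
  have h_Ioi := abs_integral_Ioi_mul_cos_le_of_tail hν hη (a := 2 * L)
    (fun t ht => hR₀ t (by linarith [le_max_left R₀ 0])) k
  have h_exp : exp (-η * (2 * L)) = exp (-η * L) * exp (-η * L) := by rw [← exp_add]; ring_nf
  rw [integral_compl_Icc_of_even (hν.mul_cos k) h_even (by linarith), abs_mul, abs_two]
  calc 2 * |∫ x in Ioi (2 * L), ν x * cos (k * x)|
      ≤ 2 * ((1 + 1 / η) * exp (-η * L) * exp (-η * L)) := by
        rw [mul_assoc, ← h_exp]
        gcongr
        exact h_Ioi.trans (by gcongr)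
    _ ≤ 2 * (1 * exp (-η * L)) := by gcongr
    _ = 2 * exp (-η * L) := by ring

theorem eventually_two_mul_exp_lt {η c : ℝ} (hη : 0 < η) (hc : 0 < c) :
    ∀ᶠ L in atTop, 2 * exp (-η * L) < c * π ^ 2 / ((2 * L) ^ 2 + π ^ 2) := by
  have h_lim : Tendsto (fun L => 2 * ((2 * L) ^ 2 + π ^ 2) * exp (-η * L)) atTop (𝓝 0) := by
    have h_sq := (tendsto_rpow_mul_exp_neg_mul_atTop_nhds_zero 2 η hη).const_mul 8
    have h_exp := (tendsto_rpow_mul_exp_neg_mul_atTop_nhds_zero 0 η hη).const_mul (2 * π ^ 2)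
    simp only [rpow_two, rpow_zero, one_mul, mul_zero] at h_sq h_exp
    simpa only [add_zero] using (h_sq.add h_exp).congr fun L => by ring
  filter_upwards [h_lim.eventually (eventually_lt_nhds (by positivity : 0 < c * π ^ 2))]
    with L hL
  rw [lt_div_iff₀ (by positivity)]
  linarith

theorem sq_div_one_add_sq_le {s k : ℝ} (hs : 0 ≤ s) (hsk : s ≤ |k|) :
    s ^ 2 / (1 + s ^ 2) ≤ k ^ 2 / (1 + k ^ 2) := by
  rw [div_le_div_iff₀ (by positivity) (by positivity), ← sq_abs k]
  nlinarith [mul_le_mul hsk hsk hs (abs_nonneg k)]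

theorem le_mul_sq_div_one_add_sq_add {c m s k T e : ℝ} (hc : 0 ≤ c) (hm : c ≤ m) (hs : 0 ≤ s)
    (hs_half : s ≤ 1 / 2) (hsk : s ≤ k) (h_small : |k| ≤ 1 → |T| ≤ 2 * e)
    (h_large : |T| ≤ c / 4) (he : 0 ≤ e) :
    c * (s ^ 2 / (1 + s ^ 2)) - 2 * e ≤ m * k ^ 2 / (1 + k ^ 2) + T := by
  have hmk : c * (k ^ 2 / (1 + k ^ 2)) ≤ m * k ^ 2 / (1 + k ^ 2) := by
    rw [mul_div_assoc]; gcongr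
  have hmono := mul_le_mul_of_nonneg_left (sq_div_one_add_sq_le hs (hsk.trans (le_abs_self k))) hc
  rcases le_or_gt |k| 1 with hk | hk
  · linarith [(abs_le.1 (h_small hk)).1]
  · have hk_half : 1 / 2 ≤ k ^ 2 / (1 + k ^ 2) := by
      rw [div_le_div_iff₀ (by norm_num) (by positivity), ← sq_abs k]; nlinarith
    have hs_quarter : s ^ 2 / (1 + s ^ 2) ≤ 1 / 4 := by
      rw [div_le_div_iff₀ (by positivity) (by norm_num)]; nlinarith
    nlinarith [(abs_le.1 h_large).1, mul_le_mul_of_nonneg_left hk_half hc,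
      mul_le_mul_of_nonneg_left hs_quarter hc]

theorem stmt_10_general (ν : ℝ → ℝ) (hν_int : Integrable ν) (hν_even : ∀ x, ν (-x) = ν x)
    (η : ℝ) (hη : 0 < η)
    (htail : ∃ R₀ : ℝ, ∀ R ≥ R₀, |∫ x in {x : ℝ | R ≤ |x|}, ν x| ≤ 2 * Real.exp (-η * R))
    (M : ℝ → ℝ) (c_M : ℝ) (hc_M : 0 < c_M) (hM : ∀ k, c_M ≤ M k)
    (hsymbol : ∀ k : ℝ, 1 - ∫ x : ℝ, ν x * Real.cos (k * x)
      = M k * k ^ 2 / (1 + k ^ 2)) :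
    ∃ L₀ : ℝ, ∀ L ≥ L₀, ∀ j : ℕ, 1 ≤ j →
      c_M * π ^ 2 / ((2 * L) ^ 2 + π ^ 2) - 2 * Real.exp (-η * L)
        ≤ 1 - ∫ x in Icc (-(2 * L)) (2 * L), ν x * Real.cos (j * π * x / (2 * L)) ∧
      0 < c_M * π ^ 2 / ((2 * L) ^ 2 + π ^ 2) - 2 * Real.exp (-η * L) := by
  have h_abs_tail := (tendsto_integral_compl_Icc_atTop hν_int.abs).comp
    (tendsto_id.const_mul_atTop two_pos)
  obtain ⟨L₀, hL₀⟩ := eventually_atTop.1 <|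
    (eventually_abs_integral_compl_Icc_mul_cos_le hν_int hν_even hη
      (exists_abs_integral_Ioi_le_of_even hν_int hν_even htail)).and <|
    (h_abs_tail.eventually (eventually_le_nhds (by positivity : 0 < c_M / 4))).and <|
    (eventually_ge_atTop π).and (eventually_two_mul_exp_lt hη hc_M)
  refine ⟨L₀, fun L hL j hj => ?_⟩
  obtain ⟨h_small, h_large, hLπ, h_pos⟩ := hL₀ L hL
  refine ⟨?_, sub_pos.2 h_pos⟩
  have hL0 : 0 < L := pi_pos.trans_le hLπ
  set k : ℝ := j * π / (2 * L)
  have h_split : 1 - ∫ x in Icc (-(2 * L)) (2 * L), ν x * cos (j * π * x / (2 * L))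
      = M k * k ^ 2 / (1 + k ^ 2) + ∫ x in (Icc (-(2 * L)) (2 * L))ᶜ, ν x * cos (k * x) := by
    have hkx : ∀ x, j * π * x / (2 * L) = k * x := fun x => mul_div_right_comm _ _ _
    simp_rw [hkx]
    rw [← hsymbol k, ← integral_add_compl measurableSet_Icc (hν_int.mul_cos k)]
    ring
  have h_base : c_M * π ^ 2 / ((2 * L) ^ 2 + π ^ 2)
      = c_M * ((π / (2 * L)) ^ 2 / (1 + (π / (2 * L)) ^ 2)) := by
    field_simp
  rw [h_split, h_base]
  refine le_mul_sq_div_one_add_sq_add hc_M.le (hM k) (by positivity) ?_ ?_ (h_small k)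
    ((abs_setIntegral_mul_cos_le hν_int _ k).trans h_large) (exp_pos _).le
  · rw [div_le_iff₀ (by positivity)]
    linarith
  · exact div_le_div_of_nonneg_right (le_mul_of_one_le_left pi_pos.le (by exact_mod_cast hj))
      (by positivity)

/-- Lower bound on the symbol quantities `Λ_j` for large `L`: for an even, unit-mass,
exponentially localized kernel whose Fourier symbol factors as `M(k) k²/(1+k²)` with
`M ≥ c_M > 0`, the quantities
`Λ_j = 1 - ∫_{-2L}^{2L} ν(x) cos(jπx/(2L)) dx` satisfy
`Λ_j ≥ c_M π²/((2L)² + π²) - 2 e^{-ηL} > 0` for all `j ≥ 1`. -/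
theorem stmt_10 (ν : ℝ → ℝ) (hν_int : Integrable ν) (hν_even : ∀ x, ν (-x) = ν x)
    (hmass : ∫ x : ℝ, ν x = 1)
    (η : ℝ) (hη : 0 < η)
    (htail : ∃ R₀ : ℝ, ∀ R ≥ R₀, |∫ x in {x : ℝ | R ≤ |x|}, ν x| ≤ 2 * Real.exp (-η * R))
    (M : ℝ → ℝ) (c_M : ℝ) (hc_M : 0 < c_M) (hM : ∀ k, c_M ≤ M k)
    (hsymbol : ∀ k : ℝ, 1 - ∫ x : ℝ, ν x * Real.cos (k * x)
      = M k * k ^ 2 / (1 + k ^ 2)) :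
    ∃ L₀ : ℝ, ∀ L ≥ L₀, ∀ j : ℕ, 1 ≤ j →
      c_M * π ^ 2 / ((2 * L) ^ 2 + π ^ 2) - 2 * Real.exp (-η * L)
        ≤ 1 - ∫ x in Icc (-(2 * L)) (2 * L), ν x * Real.cos (j * π * x / (2 * L)) ∧
      0 < c_M * π ^ 2 / ((2 * L) ^ 2 + π ^ 2) - 2 * Real.exp (-η * L) :=
  stmt_10_general ν hν_int hν_even η hη htail M c_M hc_M hM hsymbol
end

section
/- Let ν(y) = (1/2) e^{−|y|} and a > 0, and let f(x) = 1/(1+x²) − (1/2)/(1+(x−a)²) − (1/2)/(1+(x+a)²). Then ∫_ℝ f(x) dx = 0 and ∫_ℝ x f(x) dx = 0, and the function u(x) = f(x) − ∫_{−∞}^x ∫_{−∞}^w f(y) dy dw satisfies L∗u(x) = ∫_ℝ (u(x) − u(x−y)) ν(y) dy = f(x) for all x ∈ ℝ. -/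
/-!
Let `G` and `F` be the primitives of `f` and of `G` from `-∞`, so that `u = f - F` and
`F'' = f`. Since `(φ - φ'') e^{-y} = -((φ + φ') e^{-y})'`, on each half-line the integrand
`(u x - u (x ∓ y)) e^{-y}/2` is the derivative of `-(u x + F (x ∓ y) ∓ G (x ∓ y)) e^{-y}/2`.
The two half-lines contribute `(u x + F x - G x)/2` and `(u x + F x + G x)/2`, which add up
to `u x + F x = f x`. The boundary terms vanish once `f` is continuous, integrable and bounded
and `G` is integrable. Here `f = g - (g (· - a) + g (· + a))/2` with `g = 1/(1+x²)`, so
`∫ f = 0` and `f` is even. Moreover `|f y| ≤ C/(1+y²)²`, which together with `∫ f = 0`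
gives `|G w| ≤ Cπ/(1+w²)`, so `G` is integrable.
-/

open MeasureTheory Set Filter Topology Real

noncomputable def leftPrimitive (f : ℝ → ℝ) (x : ℝ) : ℝ := ∫ y in Iic x, f y

section LeftPrimitive

variable {f : ℝ → ℝ}

theorem leftPrimitive_eq_add_intervalIntegral (hf : Integrable f) (x : ℝ) :
    leftPrimitive f x = (∫ y in Iic 0, f y) + ∫ y in 0..x, f y := by
  rw [leftPrimitive, ← intervalIntegral.integral_Iic_sub_Iic hf.integrableOn hf.integrableOn]
  ring

theorem hasDerivAt_leftPrimitive (hf : Integrable f) {x : ℝ} (hx : ContinuousAt f x) :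
    HasDerivAt (leftPrimitive f) (f x) x :=
  ((intervalIntegral.integral_hasDerivAt_right hf.intervalIntegrable
    hf.aestronglyMeasurable.stronglyMeasurableAtFilter hx).const_add _).congr_of_eventuallyEq
    (Eventually.of_forall (leftPrimitive_eq_add_intervalIntegral hf))

theorem continuous_leftPrimitive (hf : Integrable f) (hc : Continuous f) :
    Continuous (leftPrimitive f) :=
  continuous_iff_continuousAt.2 fun _ ↦ (hasDerivAt_leftPrimitive hf hc.continuousAt).continuousAt

theorem tendsto_leftPrimitive_atBot (hf : Integrable f) :
    Tendsto (leftPrimitive f) atBot (𝓝 0) := by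
  have h := (intervalIntegral_tendsto_integral_Iic 0 hf.integrableOn tendsto_id).const_sub
    (∫ y in Iic 0, f y)
  rw [sub_self] at h
  refine h.congr fun x ↦ ?_
  rw [leftPrimitive_eq_add_intervalIntegral hf, intervalIntegral.integral_symm, id]
  ring

theorem tendsto_leftPrimitive_atTop (hf : Integrable f) :
    Tendsto (leftPrimitive f) atTop (𝓝 (∫ y, f y)) := by
  have h := (intervalIntegral_tendsto_integral_Ioi 0 hf.integrableOn tendsto_id).const_add
    (∫ y in Iic 0, f y)
  rw [intervalIntegral.integral_Iic_add_Ioi hf.integrableOn hf.integrableOn] at h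
  exact h.congr fun x ↦ (leftPrimitive_eq_add_intervalIntegral hf x).symm

theorem leftPrimitive_eq_neg_integral_Ioi (hf : Integrable f) (hmean : ∫ y, f y = 0) (x : ℝ) :
    leftPrimitive f x = -∫ y in Ioi x, f y := by
  rw [← intervalIntegral.integral_Iic_add_Ioi hf.integrableOn hf.integrableOn] at hmean
  rw [leftPrimitive]
  linarith

theorem abs_leftPrimitive_le (hf : Integrable f) (x : ℝ) :
    |leftPrimitive f x| ≤ ∫ y, |f y| :=
  abs_integral_le_integral_abs.trans
    (setIntegral_le_integral hf.abs (ae_of_all _ fun _ ↦ abs_nonneg _))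

end LeftPrimitive

theorem integrable_exp_neg_abs : Integrable fun y : ℝ ↦ exp (-|y|) := by
  rw [← integrableOn_univ, ← Iic_union_Ioi (a := (0 : ℝ))]
  refine IntegrableOn.union
    ((integrableOn_exp_Iic 0).congr_fun (fun y hy ↦ ?_) measurableSet_Iic)
    ((integrableOn_exp_neg_Ioi 0).congr_fun (fun y hy ↦ ?_) measurableSet_Ioi)
  · rw [abs_of_nonpos hy, neg_neg]
  · rw [abs_of_pos (mem_Ioi.1 hy)]

theorem integral_Ioi_add_sub_mul_exp_neg {φ φ' φ'' : ℝ → ℝ} {L : ℝ} (c : ℝ)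
    (hφ : ∀ y ∈ Ici (0 : ℝ), HasDerivAt φ (φ' y) y)
    (hφ' : ∀ y ∈ Ici (0 : ℝ), HasDerivAt φ' (φ'' y) y)
    (hint : IntegrableOn (fun y ↦ (c + φ y - φ'' y) * (1 / 2 * exp (-y))) (Ioi 0))
    (hlim : Tendsto (fun y ↦ φ y + φ' y) atTop (𝓝 L)) :
    ∫ y in Ioi 0, (c + φ y - φ'' y) * (1 / 2 * exp (-y)) = (c + φ 0 + φ' 0) / 2 := by
  have hderiv : ∀ y ∈ Ici (0 : ℝ), HasDerivAt (fun y ↦ -((c + φ y + φ' y) * exp (-y)) / 2)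
      ((c + φ y - φ'' y) * (1 / 2 * exp (-y))) y := by
    intro y hy
    refine ((((hφ y hy).const_add c).add (hφ' y hy)).mul
      (hasDerivAt_neg y).exp).neg.div_const 2 |>.congr_deriv ?_
    simp only [Pi.add_apply]
    ring
  have hzero : Tendsto (fun y ↦ -((c + φ y + φ' y) * exp (-y)) / 2) atTop (𝓝 0) := by
    simpa [add_assoc] using
      (((hlim.const_add c).mul tendsto_exp_neg_atTop_nhds_zero).neg.div_const 2)
  rw [integral_Ioi_of_hasDerivAt_of_tendsto' hderiv hint hzero]
  simp
  ring

noncomputable def laplaceKernel (y : ℝ) : ℝ := 1 / 2 * exp (-|y|)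

theorem integral_sub_mul_laplaceKernel_eq {f u : ℝ → ℝ} {M : ℝ} (hfc : Continuous f)
    (hfi : Integrable f) (hfM : ∀ z, |f z| ≤ M) (hGi : Integrable (leftPrimitive f))
    (hu : ∀ z, u z = f z - leftPrimitive (leftPrimitive f) z) (x : ℝ) :
    ∫ y, (u x - u (x - y)) * laplaceKernel y = f x := by
  set G := leftPrimitive f
  set F := leftPrimitive G
  have hGc : Continuous G := continuous_leftPrimitive hfi hfc
  have hG' (z : ℝ) : HasDerivAt G (f z) z := hasDerivAt_leftPrimitive hfi hfc.continuousAt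
  have hF' (z : ℝ) : HasDerivAt F (G z) z := hasDerivAt_leftPrimitive hGi hGc.continuousAt
  have huc : Continuous u := by
    rw [funext hu]; exact hfc.sub (continuous_leftPrimitive hGi hGc)
  have hub (z : ℝ) : |u z| ≤ M + ∫ w, |G w| := by
    rw [hu]; exact (abs_sub _ _).trans (add_le_add (hfM z) (abs_leftPrimitive_le hGi z))
  set h := fun y ↦ (u x - u (x - y)) * laplaceKernel y with h_def
  have hint : Integrable h := by
    refine (integrable_exp_neg_abs.const_mul _).bdd_mul (c := 2 * (M + ∫ w, |G w|))
      (by fun_prop) (ae_of_all _ fun y ↦ ?_)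
    rw [Real.norm_eq_abs]
    linarith [abs_sub (u x) (u (x - y)), hub x, hub (x - y)]
  have hpos : ∫ y in Ioi 0, h y = (u x + F x - G x) / 2 := by
    have hh : EqOn h (fun y ↦ (u x + F (x - y) - f (x - y)) * (1 / 2 * exp (-y))) (Ioi 0) :=
      fun y hy ↦ by simp only [h_def, laplaceKernel, hu (x - y), abs_of_pos (mem_Ioi.1 hy)]; ring
    rw [setIntegral_congr_fun measurableSet_Ioi hh,
      integral_Ioi_add_sub_mul_exp_neg (u x) (φ' := fun y ↦ -G (x - y))
        (fun y _ ↦ (hF' (x - y)).comp_const_sub x y)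
        (fun y _ ↦ ((hG' (x - y)).comp_const_sub x y).neg.congr_deriv (neg_neg _))
        (hint.integrableOn.congr_fun hh measurableSet_Ioi)
        (((tendsto_leftPrimitive_atBot hGi).sub (tendsto_leftPrimitive_atBot hfi)).comp
          (tendsto_atBot_add_const_left _ x tendsto_neg_atTop_atBot))]
    simp [sub_eq_add_neg]
  have hneg : ∫ y in Ioi 0, h (-y) = (u x + F x + G x) / 2 := by
    have hh : EqOn (fun y ↦ h (-y))
        (fun y ↦ (u x + F (x + y) - f (x + y)) * (1 / 2 * exp (-y))) (Ioi 0) := fun y hy ↦ by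
      simp only [h_def, laplaceKernel, sub_neg_eq_add, hu (x + y), abs_neg,
        abs_of_pos (mem_Ioi.1 hy)]
      ring
    rw [setIntegral_congr_fun measurableSet_Ioi hh,
      integral_Ioi_add_sub_mul_exp_neg (u x) (φ' := fun y ↦ G (x + y))
        (fun y _ ↦ (hF' (x + y)).comp_const_add x y)
        (fun y _ ↦ (hG' (x + y)).comp_const_add x y)
        (hint.comp_neg.integrableOn.congr_fun hh measurableSet_Ioi)
        (((tendsto_leftPrimitive_atTop hGi).add (tendsto_leftPrimitive_atTop hfi)).comp
          (tendsto_atTop_add_const_left _ x tendsto_id))]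
    simp
  rw [integral_comp_neg_Ioi, neg_zero] at hneg
  rw [← intervalIntegral.integral_Iic_add_Ioi hint.integrableOn hint.integrableOn, hneg, hpos,
    hu]
  ring

section Decay

variable {g : ℝ → ℝ} {C : ℝ}

theorem abs_setIntegral_le_of_abs_le_div_sq {w : ℝ} {s : Set ℝ} (hs : MeasurableSet s)
    (hg : ∀ y, |g y| ≤ C / (1 + y ^ 2) ^ 2) (hsw : ∀ y ∈ s, w ^ 2 ≤ y ^ 2) :
    |∫ y in s, g y| ≤ C * π / (1 + w ^ 2) := by
  have hC : 0 ≤ C := by simpa using (abs_nonneg _).trans (hg 0)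
  have hpt : ∀ y ∈ s, ‖g y‖ ≤ C / (1 + w ^ 2) * (1 + y ^ 2)⁻¹ := fun y hy ↦ by
    calc ‖g y‖ ≤ C / ((1 + y ^ 2) * (1 + y ^ 2)) := by
          rw [Real.norm_eq_abs, ← sq]; exact hg y
      _ ≤ C / ((1 + w ^ 2) * (1 + y ^ 2)) := by gcongr C / (?_ * _); linarith [hsw y hy]
      _ = C / (1 + w ^ 2) * (1 + y ^ 2)⁻¹ := by rw [div_mul_eq_div_div, div_eq_mul_inv]
  calc |∫ y in s, g y| ≤ ∫ y in s, C / (1 + w ^ 2) * (1 + y ^ 2)⁻¹ :=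
        norm_integral_le_of_norm_le (integrable_inv_one_add_sq.const_mul _).integrableOn
          ((ae_restrict_iff' hs).2 (ae_of_all _ hpt))
    _ = C / (1 + w ^ 2) * ∫ y in s, (1 + y ^ 2)⁻¹ := integral_const_mul _ _
    _ ≤ C / (1 + w ^ 2) * π := by
        gcongr
        exact (setIntegral_le_integral integrable_inv_one_add_sq
          (ae_of_all _ fun y ↦ by positivity)).trans_eq integral_univ_inv_one_add_sq
    _ = C * π / (1 + w ^ 2) := by ring

theorem integrable_of_abs_le_div_sq (hgc : Continuous g)
    (hg : ∀ y, |g y| ≤ C / (1 + y ^ 2) ^ 2) : Integrable g := by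
  refine (integrable_inv_one_add_sq.const_mul C).mono' hgc.aestronglyMeasurable
    (ae_of_all _ fun y ↦ (hg y).trans ?_)
  have hC : 0 ≤ C := by simpa using (abs_nonneg _).trans (hg 0)
  rw [← div_eq_mul_inv, sq]
  exact div_le_div_of_nonneg_left hC (by positivity)
    (le_mul_of_one_le_left (by positivity) (by nlinarith))

theorem abs_leftPrimitive_le_of_abs_le_div_sq (hgi : Integrable g) (hmean : ∫ y, g y = 0)
    (hg : ∀ y, |g y| ≤ C / (1 + y ^ 2) ^ 2) (w : ℝ) :
    |leftPrimitive g w| ≤ C * π / (1 + w ^ 2) := by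
  rcases le_total w 0 with hw | hw
  · exact abs_setIntegral_le_of_abs_le_div_sq measurableSet_Iic hg
      fun y hy ↦ by nlinarith [mem_Iic.1 hy]
  · rw [leftPrimitive_eq_neg_integral_Ioi hgi hmean, abs_neg]
    exact abs_setIntegral_le_of_abs_le_div_sq measurableSet_Ioi hg
      fun y hy ↦ by nlinarith [mem_Ioi.1 hy]

theorem integrable_leftPrimitive_of_abs_le_div_sq (hgc : Continuous g) (hmean : ∫ y, g y = 0)
    (hg : ∀ y, |g y| ≤ C / (1 + y ^ 2) ^ 2) : Integrable (leftPrimitive g) := by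
  have hgi := integrable_of_abs_le_div_sq hgc hg
  refine (integrable_inv_one_add_sq.const_mul (C * π)).mono'
    (continuous_leftPrimitive hgi hgc).aestronglyMeasurable (ae_of_all _ fun w ↦ ?_)
  rw [Real.norm_eq_abs, ← div_eq_mul_inv]
  exact abs_leftPrimitive_le_of_abs_le_div_sq hgi hmean hg w

end Decay

theorem integral_mul_eq_zero_of_even {g : ℝ → ℝ} (hg : ∀ x, g (-x) = g x) :
    ∫ x, x * g x = 0 := by
  have h := integral_neg_eq_self (fun x ↦ x * g x) volume
  simp only [hg, neg_mul, integral_neg] at h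
  linarith

noncomputable def translateDefect (g : ℝ → ℝ) (a x : ℝ) : ℝ :=
  g x - (g (x - a) + g (x + a)) / 2

section TranslateDefect

variable {g : ℝ → ℝ}

theorem integral_translateDefect (hg : Integrable g) (a : ℝ) :
    ∫ x, translateDefect g a x = 0 := by
  have hsub : Integrable fun x ↦ g (x - a) := hg.comp_sub_right a
  have hadd : Integrable fun x ↦ g (x + a) := hg.comp_add_right a
  have hmid : Integrable fun x ↦ (g (x - a) + g (x + a)) / 2 := (hsub.add hadd).div_const 2
  unfold translateDefect
  rw [integral_sub hg hmid, integral_div, integral_add hsub hadd, integral_sub_right_eq_self,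
    integral_add_right_eq_self]
  ring

theorem translateDefect_neg (hg : ∀ x, g (-x) = g x) (a x : ℝ) :
    translateDefect g a (-x) = translateDefect g a x := by
  rw [translateDefect, translateDefect, hg, show -x - a = -(x + a) by ring,
    show -x + a = -(x - a) by ring, hg, hg, add_comm]

theorem abs_translateDefect_inv_one_add_sq_le (a y : ℝ) :
    |translateDefect (fun x ↦ (1 + x ^ 2)⁻¹) a y|
      ≤ 12 * a ^ 2 * (1 + a ^ 2) ^ 3 / (1 + y ^ 2) ^ 2 := by
  set P := (1 + (y - a) ^ 2) * (1 + (y + a) ^ 2)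
  have hP : 0 < P := by positivity
  have h_eq : translateDefect (fun x ↦ (1 + x ^ 2)⁻¹) a y
      = a ^ 2 * (1 + a ^ 2 - 3 * y ^ 2) / ((1 + y ^ 2) * P) := by
    simp only [translateDefect, P]; field_simp; ring
  have h_num : |a ^ 2 * (1 + a ^ 2 - 3 * y ^ 2)| ≤ 3 * a ^ 2 * (1 + a ^ 2) * (1 + y ^ 2) := by
    have h : |1 + a ^ 2 - 3 * y ^ 2| ≤ 3 * (1 + a ^ 2) * (1 + y ^ 2) := by
      rw [abs_le]
      constructor <;>
        nlinarith [sq_nonneg a, sq_nonneg y, mul_nonneg (sq_nonneg a) (sq_nonneg y)]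
    rw [abs_mul, abs_of_nonneg (sq_nonneg a)]
    calc a ^ 2 * |1 + a ^ 2 - 3 * y ^ 2|
        ≤ a ^ 2 * (3 * (1 + a ^ 2) * (1 + y ^ 2)) := by gcongr
      _ = 3 * a ^ 2 * (1 + a ^ 2) * (1 + y ^ 2) := by ring
  have h_peetre (b : ℝ) (hb : b ^ 2 = a ^ 2) :
      1 + y ^ 2 ≤ 2 * (1 + a ^ 2) * (1 + (y - b) ^ 2) := by
    nlinarith [sq_nonneg (y - 2 * b), mul_nonneg (sq_nonneg a) (sq_nonneg (y - b))]
  have h_den : (1 + y ^ 2) ^ 2 ≤ 4 * (1 + a ^ 2) ^ 2 * P := by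
    have := mul_le_mul (h_peetre a rfl) (h_peetre (-a) (by ring)) (by positivity) (by positivity)
    simp only [P, sub_neg_eq_add] at this ⊢
    linarith
  have hD : 0 < (1 + y ^ 2) * P := mul_pos (by positivity) hP
  rw [h_eq, abs_div, abs_of_pos hD, div_le_div_iff₀ hD (by positivity)]
  calc |a ^ 2 * (1 + a ^ 2 - 3 * y ^ 2)| * (1 + y ^ 2) ^ 2
      ≤ 3 * a ^ 2 * (1 + a ^ 2) * (1 + y ^ 2) * (4 * (1 + a ^ 2) ^ 2 * P) := by gcongr
    _ = 12 * a ^ 2 * (1 + a ^ 2) ^ 3 * ((1 + y ^ 2) * P) := by ring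

end TranslateDefect

theorem stmt_17_general (a : ℝ)
    (f : ℝ → ℝ)
    (hf : ∀ x, f x = 1 / (1 + x ^ 2) - (1 / 2) / (1 + (x - a) ^ 2)
      - (1 / 2) / (1 + (x + a) ^ 2))
    (u : ℝ → ℝ)
    (hu : ∀ x, u x = f x - ∫ w in Iic x, ∫ y in Iic w, f y) :
    (∫ x : ℝ, f x) = 0 ∧ (∫ x : ℝ, x * f x) = 0 ∧
      ∀ x : ℝ, (∫ y : ℝ, (u x - u (x - y)) * (1 / 2 * Real.exp (-|y|))) = f x := by
  obtain rfl : f = translateDefect (fun x ↦ (1 + x ^ 2)⁻¹) a :=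
    funext fun x ↦ by rw [hf, translateDefect]; ring
  have hdecay := abs_translateDefect_inv_one_add_sq_le a
  have hfc : Continuous (translateDefect (fun x ↦ (1 + x ^ 2)⁻¹) a) := by
    unfold translateDefect; fun_prop (disch := intro; positivity)
  have hmean := integral_translateDefect integrable_inv_one_add_sq a
  refine ⟨hmean, integral_mul_eq_zero_of_even (translateDefect_neg (fun x ↦ by ring) a),
    integral_sub_mul_laplaceKernel_eq hfc (integrable_of_abs_le_div_sq hfc hdecay)
      (fun z ↦ (hdecay z).trans (div_le_self (by positivity) (by nlinarith [sq_nonneg z])))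
      (integrable_leftPrimitive_of_abs_le_div_sq hfc hmean hdecay) hu⟩

/-- The right-hand side `f(x) = 1/(1+x²) - (1/2)/(1+(x-a)²) - (1/2)/(1+(x+a)²)` has zero
mean and zero first moment, and `u = f - ∬ f` solves `L∗u = f` for the kernel
`ν(y) = (1/2) e^{-|y|}`. -/
theorem stmt_17 (a : ℝ) (ha : 0 < a)
    (f : ℝ → ℝ)
    (hf : ∀ x, f x = 1 / (1 + x ^ 2) - (1 / 2) / (1 + (x - a) ^ 2)
      - (1 / 2) / (1 + (x + a) ^ 2))
    (u : ℝ → ℝ)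
    (hu : ∀ x, u x = f x - ∫ w in Iic x, ∫ y in Iic w, f y) :
    (∫ x : ℝ, f x) = 0 ∧ (∫ x : ℝ, x * f x) = 0 ∧
      ∀ x : ℝ, (∫ y : ℝ, (u x - u (x - y)) * (1 / 2 * Real.exp (-|y|))) = f x :=
  stmt_17_general a f hf u hu
end
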